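/- Let A be a finite-dimensional complex Hilbert space, let ρ be any Hermitian matrix on A, and let γ be a positive definite matrix on A. Then ‖ρ‖₁ ≤ √( Tr[γ] · Tr[ (γ^{−1/4} ρ γ^{−1/4})² ] ), where γ^{−1/4} is the inverse of the positive fourth root of γ. -/

import Mathlib

open scoped BigOperators Kronecker Classical ComplexOrder
open Matrix MeasureTheory

noncomputable section

/-- Outer product `|v⟩⟨v|`. -/
def outer {A : Type*} [Fintype A] (v : A → ℂ) : Matrix A A ℂ :=
  Matrix.of fun i j => v i * star (v j)

/-- The square root `U √D Uᴴ` of a matrix, as Mathlib's former `Matrix.PosSemidef.sqrt`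
(defined from the eigendecomposition; only the Hermitian part of the proof was used). -/
def psdSqrt {n 𝕜 : Type*} [Fintype n] [DecidableEq n] [RCLike 𝕜] {A : Matrix n n 𝕜}
    (hA : A.IsHermitian) : Matrix n n 𝕜 :=
  (hA.eigenvectorUnitary : Matrix n n 𝕜) * diagonal ((↑) ∘ (√·) ∘ hA.eigenvalues) *
    (star hA.eigenvectorUnitary : Matrix n n 𝕜)

theorem psdSqrt_isHermitian {n 𝕜 : Type*} [Fintype n] [DecidableEq n] [RCLike 𝕜]
    {A : Matrix n n 𝕜} (hA : A.IsHermitian) : (psdSqrt hA).IsHermitian := by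
  unfold psdSqrt
  exact isHermitian_mul_mul_conjTranspose _
    (isHermitian_diagonal_of_self_adjoint _ (by ext i; simp))

/-- Trace norm `‖X‖₁ = Tr √(XᴴX)`. -/
def traceNorm {A : Type*} [Fintype A] [DecidableEq A] (X : Matrix A A ℂ) : ℝ :=
  (psdSqrt (Matrix.posSemidef_conjTranspose_mul_self X).1).trace.re

/-- Frobenius norm `‖X‖₂`. -/
def frobNorm {A : Type*} [Fintype A] (X : Matrix A A ℂ) : ℝ :=
  Real.sqrt ((Xᴴ * X).trace.re)

/-- Operator norm (largest singular value) `‖X‖_∞`. -/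
def opNorm {A : Type*} [Fintype A] [DecidableEq A] (X : Matrix A A ℂ) : ℝ :=
  ‖Matrix.toEuclideanCLM (𝕜 := ℂ) X‖

instance matrixMeasurableSpace {m n : Type*} : MeasurableSpace (Matrix m n ℂ) :=
  inferInstanceAs (MeasurableSpace (m → n → ℂ))

/-- A measurement superoperator (given by its POVM elements `Ms`) applied to the second
factor of a bipartite operator, tensored with the identity on the first factor `W`. -/
def measApply {W A X : Type*} [Fintype A] [DecidableEq X]
    (Ms : X → Matrix A A ℂ) (ρ : Matrix (W × A) (W × A) ℂ) :
    Matrix (W × X) (W × X) ℂ :=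
  Matrix.of fun p q =>
    if p.2 = q.2 then ∑ a : A, ∑ a' : A, Ms p.2 a a' * ρ (p.1, a') (q.1, a) else 0

/-- A measurement superoperator applied to an operator (no side register). -/
def measApply0 {A X : Type*} [Fintype A] [DecidableEq X]
    (Ms : X → Matrix A A ℂ) (ρ : Matrix A A ℂ) : Matrix X X ℂ :=
  Matrix.of fun i j => if i = j then ∑ a : A, ∑ a' : A, Ms i a a' * ρ a' a else 0

/-- The elements `Ms` form a POVM: each is positive semidefinite and they sum to `I`. -/
def IsPOVM {A X : Type*} [Fintype A] [Fintype X] [DecidableEq A]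
    (Ms : X → Matrix A A ℂ) : Prop :=
  (∀ i, (Ms i).PosSemidef) ∧ ∑ i, Ms i = 1

/-- The tuple of unit vectors `χ` defines an `(s,η)`-quasi-measurement:
`(|A|/s) ∑ᵢ |χᵢ⟩⟨χᵢ| ≤ η I`. -/
def IsQuasiTuple {A : Type*} [Fintype A] [DecidableEq A] (s : ℕ) (η : ℝ)
    (χ : Fin s → A → ℂ) : Prop :=
  (∀ i, ∑ a, Complex.normSq (χ i a) = 1) ∧
  ((η : ℂ) • (1 : Matrix A A ℂ) -
    ((Fintype.card A : ℂ) / (s : ℂ)) • ∑ i, outer (χ i)).PosSemidef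

/-- The kernel elements `(|A|/s)|χᵢ⟩⟨χᵢ|` of an `(s,η)`-quasi-measurement. -/
def quasiKernel {A : Type*} [Fintype A] (s : ℕ) (χ : Fin s → A → ℂ) :
    Fin s → Matrix A A ℂ :=
  fun i => ((Fintype.card A : ℂ) / (s : ℂ)) • outer (χ i)

/-- The inverse fourth root `γ^{-1/4}` of a positive definite matrix. -/
def invFourthRoot {n : ℕ} {γ : Matrix (Fin n) (Fin n) ℂ} (hγ : γ.PosDef) :
    Matrix (Fin n) (Fin n) ℂ :=
  (psdSqrt (psdSqrt_isHermitian hγ.posSemidef.1))⁻¹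

/-!
Let `U` be the sign of `ρ` (a Hermitian involution with `Uρ = |ρ|`) and `Q = γ^{1/4}`. Then
`‖ρ‖₁ = Tr[Uρ] = Tr[(QUQ)(Q⁻¹ρQ⁻¹)]`, which the Cauchy–Schwarz inequality for the
Hilbert–Schmidt inner product bounds by `‖QUQ‖₂ ‖Q⁻¹ρQ⁻¹‖₂`. Finally
`‖QUQ‖₂² = Tr[U γ^{1/2} U γ^{1/2}] ≤ ‖U γ^{1/2} U‖₂ ‖γ^{1/2}‖₂ = Tr[γ]`, again by Cauchy–Schwarz.
-/

open scoped MatrixOrder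

namespace Matrix

variable {n 𝕜 : Type*} [Fintype n] [RCLike 𝕜]

lemma IsHermitian.mul_mul_of_isHermitian {A Q : Matrix n n 𝕜} (hA : A.IsHermitian)
    (hQ : Q.IsHermitian) : (Q * A * Q).IsHermitian := by
  simpa only [hQ.eq] using isHermitian_mul_mul_conjTranspose Q hA

variable [DecidableEq n]

lemma IsHermitian.re_trace_mul_le {A B : Matrix n n 𝕜} (hA : A.IsHermitian)
    (hB : B.IsHermitian) :
    RCLike.re (A * B).trace ≤ √(RCLike.re (A * A).trace) * √(RCLike.re (B * B).trace) := by
  let := toMatrixSeminormedAddCommGroup (1 : Matrix n n 𝕜) PosSemidef.one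
  let := toMatrixInnerProductSpace (1 : Matrix n n 𝕜) PosSemidef.one
  have inner_eq (X Y : Matrix n n 𝕜) : inner 𝕜 X Y = (Y * 1 * Xᴴ).trace := rfl
  have key := re_inner_le_norm (𝕜 := 𝕜) B A
  simp only [norm_eq_sqrt_re_inner (𝕜 := 𝕜), inner_eq, mul_one, hA.eq, hB.eq] at key
  rwa [mul_comm √_] at key

lemma IsHermitian.re_trace_involution_conj_mul_le {P U : Matrix n n 𝕜} (hP : P.IsHermitian)
    (hU : U.IsHermitian) (hUU : U * U = 1) :
    RCLike.re (U * P * U * P).trace ≤ RCLike.re (P * P).trace := by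
  have h_sq : (U * P * U * (U * P * U)).trace = (P * P).trace := by
    rw [show U * P * U * (U * P * U) = U * (P * P * U) by
        simp only [mul_assoc, ← mul_assoc U U, hUU, one_mul],
      trace_mul_comm, mul_assoc, hUU, mul_one]
  have h_nonneg : 0 ≤ RCLike.re (P * P).trace := by
    simpa [hP.eq] using (RCLike.nonneg_iff.mp (posSemidef_conjTranspose_mul_self P).trace_nonneg).1
  calc RCLike.re (U * P * U * P).trace
      ≤ √(RCLike.re (U * P * U * (U * P * U)).trace) * √(RCLike.re (P * P).trace) :=
        (hP.mul_mul_of_isHermitian hU).re_trace_mul_le hP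
    _ = RCLike.re (P * P).trace := by rw [h_sq, Real.mul_self_sqrt h_nonneg]

lemma trace_conj_mul_conj_inv {Q : Matrix n n 𝕜} (hQ : IsUnit Q) (A B : Matrix n n 𝕜) :
    (Q * A * Q * (Q⁻¹ * B * Q⁻¹)).trace = (A * B).trace := by
  have hQ_det : IsUnit Q.det := (isUnit_iff_isUnit_det Q).mp hQ
  rw [show Q * A * Q * (Q⁻¹ * B * Q⁻¹) = Q * (A * B * Q⁻¹) by
      simp only [mul_assoc, mul_nonsing_inv_cancel_left _ _ hQ_det],
    trace_mul_comm, mul_assoc, nonsing_inv_mul _ hQ_det, mul_one]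

lemma IsHermitian.exists_involution_mul_eq_abs {A : Matrix n n 𝕜} (hA : A.IsHermitian) :
    ∃ U : Matrix n n 𝕜, U.IsHermitian ∧ U * U = 1 ∧ U * A = CFC.abs A := by
  have hA' : IsSelfAdjoint A := hA
  -- the sign function, taken to be `1` at `0` so that `U` is an involution
  set s : ℝ → ℝ := fun x => if 0 ≤ x then 1 else -1
  have hs : ContinuousOn s (spectrum ℝ A) := A.finite_real_spectrum.continuousOn _
  refine ⟨cfc s A, cfc_predicate s A, ?_, ?_⟩
  · rw [← cfc_mul s s A, ← cfc_one ℝ A]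
    exact cfc_congr fun x _ => by simp only [s]; split_ifs <;> norm_num
  · nth_rewrite 2 [← cfc_id ℝ A]
    rw [← cfc_mul s id A, CFC.abs_eq_cfc_norm A]
    refine cfc_congr fun x _ => ?_
    simp only [s, id, Real.norm_eq_abs]
    split_ifs with h
    · rw [one_mul, abs_of_nonneg h]
    · rw [abs_of_neg (not_le.mp h), neg_one_mul]

end Matrix

lemma psdSqrt_eq_cfcSqrt {n 𝕜 : Type*} [Fintype n] [DecidableEq n] [RCLike 𝕜]
    {A : Matrix n n 𝕜} (hA : A.PosSemidef) : psdSqrt hA.1 = CFC.sqrt A := by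
  rw [CFC.sqrt_eq_real_sqrt A hA.nonneg, cfcₙ_eq_cfc, hA.1.cfc_eq]
  simp [psdSqrt, IsHermitian.cfc, Unitary.conjStarAlgAut_apply]

lemma traceNorm_eq_re_trace_abs {n : Type*} [Fintype n] [DecidableEq n] (A : Matrix n n ℂ) :
    traceNorm A = (CFC.abs A).trace.re := by
  rw [traceNorm, psdSqrt_eq_cfcSqrt (posSemidef_conjTranspose_mul_self A)]
  rfl

lemma invFourthRoot_eq {n : ℕ} {γ : Matrix (Fin n) (Fin n) ℂ} (hγ : γ.PosDef) :
    invFourthRoot hγ = (CFC.sqrt (CFC.sqrt γ))⁻¹ := by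
  rw [invFourthRoot, ← psdSqrt_eq_cfcSqrt (CFC.sqrt_nonneg γ).posSemidef]
  congr 2
  exact psdSqrt_eq_cfcSqrt hγ.posSemidef

/-- Lemma `lem:tight12`: `‖ρ‖₁ ≤ √(Tr[γ]·Tr[(γ^{-1/4} ρ γ^{-1/4})²])`. -/
theorem trace_norm_le_weighted_two_norm
    {n : ℕ} (ρ γ : Matrix (Fin n) (Fin n) ℂ)
    (hρ : ρ.IsHermitian) (hγ : γ.PosDef) :
    traceNorm ρ ≤ Real.sqrt (γ.trace.re *
      ((invFourthRoot hγ * ρ * invFourthRoot hγ) *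
        (invFourthRoot hγ * ρ * invFourthRoot hγ)).trace.re) := by
  obtain ⟨U, hU, hUU, hUρ⟩ := hρ.exists_involution_mul_eq_abs
  set P := CFC.sqrt γ
  set Q := CFC.sqrt P
  have hP : P.IsHermitian := (CFC.sqrt_nonneg γ).posSemidef.1
  have hQ : Q.IsHermitian := (CFC.sqrt_nonneg P).posSemidef.1
  have hQQ : Q * Q = P := CFC.sqrt_mul_sqrt_self P
  rw [invFourthRoot_eq]
  set B := Q⁻¹ * ρ * Q⁻¹
  have h_weight : (Q * U * Q * (Q * U * Q)).trace.re ≤ γ.trace.re := by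
    rw [show Q * U * Q * (Q * U * Q) = Q * (U * P * U * Q) by simp only [← hQQ, mul_assoc],
      trace_mul_comm, mul_assoc (U * P * U), hQQ, ← CFC.sqrt_mul_sqrt_self γ]
    exact hP.re_trace_involution_conj_mul_le hU hUU
  calc traceNorm ρ = (Q * U * Q * B).trace.re := by
        rw [traceNorm_eq_re_trace_abs, ← hUρ,
          trace_conj_mul_conj_inv hγ.isStrictlyPositive.sqrt.isUnit_cfcSqrt]
    _ ≤ √(Q * U * Q * (Q * U * Q)).trace.re * √(B * B).trace.re :=
        (hU.mul_mul_of_isHermitian hQ).re_trace_mul_le (hρ.mul_mul_of_isHermitian hQ.inv)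
    _ ≤ √γ.trace.re * √(B * B).trace.re := by gcongr
    _ = √(γ.trace.re * (B * B).trace.re) :=
        (Real.sqrt_mul (RCLike.nonneg_iff.mp hγ.posSemidef.trace_nonneg).1 _).symm
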